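/- arXiv:1706.06441 — 2 statements merged into one kernel-verified Lean document; each statement's English description precedes it below -/
import Mathlib

section
/- Let T be a tournament with minimum out-degree at least 4. Then there is a balanced partition of V(T) into two sets V1 and V2 such that the minimum out-degrees of the induced subdigraph on V1, the induced subdigraph on V2, and the bipartite subdigraph consisting of all arcs between V1 and V2, are all at least 1. -/
/-!
Call `F ⊆ V` good if every out-neighbourhood `N⁺(v)` meets both `F` and its complement; then the
partition `(F, Fᶜ)` has all three required minimum out-degrees. Split the vertices into pairs, with
at most one vertex left over, and let `F` take one vertex of each pair uniformly at random, so that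
`F` is balanced. An out-neighbourhood containing a whole pair is never monochromatic, and any other
`N⁺(v)` is monochromatic with probability at most `2 ^ (1 - d⁺(v))`.

In a tournament at most `2k + 1` vertices have out-degree at most `k`. This alone only bounds
`∑ 2 ^ (-d⁺(v))` by `11/16`, because of up to nine vertices of out-degree `4`. So the pairing is
first chosen greedily so that the out-neighbourhoods of enough vertices of out-degree `4` contain a
pair; when there are nine of them they form a regular tournament, and counting pairs of
out-neighbours shows that two of them share a pair. The sum over the remaining vertices is then at
most `15/32 < 1/2`.
-/

open Finset Function

def IsTournament {V : Type*} (A : V → V → Prop) : Prop :=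
  (∀ v : V, ¬ A v v) ∧ ∀ u v : V, u ≠ v → Xor' (A u v) (A v u)

section Pairing

variable {ι V : Type*}

def ContainsPair (e : ι × Bool → V) (S : Finset V) : Prop :=
  ∃ i, e (i, true) ∈ S ∧ e (i, false) ∈ S

lemma eq_decide_of_apply_mem [DecidableEq V] {e : ι × Bool → V} {S : Finset V}
    (hS : ¬ ContainsPair e S) {i : ι} {b : Bool} (h : e (i, b) ∈ S) :
    b = decide (e (i, true) ∈ S) := by
  cases b
  · exact (decide_eq_false fun ht => hS ⟨i, ht, h⟩).symm
  · exact (decide_eq_true h).symm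

lemma card_filter_forall_eq_mul_two_pow [Fintype ι] [DecidableEq ι] (T : Finset ι)
    (σ : ι → Bool) : #{ε : ι → Bool | ∀ i ∈ T, ε i = σ i} * 2 ^ #T = 2 ^ Fintype.card ι := by
  have hpi : ({ε : ι → Bool | ∀ i ∈ T, ε i = σ i} : Finset _) =
      Fintype.piFinset fun i => if i ∈ T then {σ i} else univ := by
    ext ε
    simp only [mem_filter, mem_univ, true_and, Fintype.mem_piFinset]
    refine forall_congr' fun i => ?_
    split_ifs <;> simp_all
  rw [hpi, Fintype.card_piFinset]
  simp only [apply_ite card, card_singleton, card_univ, Fintype.card_bool]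
  rw [prod_ite, prod_const_one, one_mul, prod_const, ← pow_add, filter_not, filter_mem_eq_inter,
    univ_inter, card_sdiff_of_subset (subset_univ _), card_univ,
    Nat.sub_add_cancel (card_le_univ T)]

variable [Fintype ι] [DecidableEq V]

instance (e : ι × Bool → V) : DecidablePred (ContainsPair e) := fun S =>
  inferInstanceAs (Decidable (∃ i, e (i, true) ∈ S ∧ e (i, false) ∈ S))

/-- `e` lists the pairs `{e (i, true), e (i, false)}`, and `ε` picks `e (i, ε i)` from pair `i`. -/
def transversal (e : ι × Bool → V) (ε : ι → Bool) : Finset V :=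
  univ.image fun i => e (i, ε i)

variable {e : ι × Bool → V}

lemma apply_mem_transversal_iff (he : Injective e) {ε : ι → Bool} {i : ι} {b : Bool} :
    e (i, b) ∈ transversal e ε ↔ ε i = b := by
  simp only [transversal, mem_image, mem_univ, true_and]
  constructor
  · rintro ⟨j, h⟩
    obtain ⟨rfl, rfl⟩ := Prod.ext_iff.mp (he h)
    rfl
  · rintro rfl
    exact ⟨i, rfl⟩

lemma card_transversal (he : Injective e) (ε : ι → Bool) :
    #(transversal e ε) = Fintype.card ι :=
  card_image_of_injective _ fun _ _ h => congrArg Prod.fst (he h)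

lemma transversal_subset_image (ε : ι → Bool) : transversal e ε ⊆ univ.image e :=
  image_subset_iff.mpr fun _ _ => mem_image_of_mem e (mem_univ _)

lemma ContainsPair.not_monochromatic (he : Injective e) {S : Finset V} (hS : ContainsPair e S)
    (ε : ι → Bool) : ¬ S ⊆ transversal e ε ∧ ¬ Disjoint S (transversal e ε) := by
  obtain ⟨i, ht, hf⟩ := hS
  rw [not_subset, not_disjoint_iff]
  cases hε : ε i
  · exact ⟨⟨_, ht, by simp [apply_mem_transversal_iff he, hε]⟩,
      ⟨_, hf, by simp [apply_mem_transversal_iff he, hε]⟩⟩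
  · exact ⟨⟨_, hf, by simp [apply_mem_transversal_iff he, hε]⟩,
      ⟨_, ht, by simp [apply_mem_transversal_iff he, hε]⟩⟩

lemma card_le_of_not_containsPair {S : Finset V} (hS : ¬ ContainsPair e S) :
    #S ≤ #{i | ∃ b, e (i, b) ∈ S} + #{w ∈ S | w ∉ univ.image e} := by
  refine (card_le_card fun w hw => ?_).trans ((card_union_le _ _).trans
    (Nat.add_le_add_right (card_image_le (f := fun i => e (i, decide (e (i, true) ∈ S)))) _))
  by_cases hwe : w ∈ univ.image e
  · obtain ⟨⟨i, b⟩, -, rfl⟩ := mem_image.mp hwe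
    refine mem_union_left _ (mem_image.mpr ⟨i, mem_filter.mpr ⟨mem_univ _, b, hw⟩, ?_⟩)
    rw [← eq_decide_of_apply_mem hS hw]
  · exact mem_union_right _ (mem_filter.mpr ⟨hw, hwe⟩)

lemma card_compl_image_le_one [Fintype V] (he : Injective e)
    (hV : Fintype.card V ≤ 2 * Fintype.card ι + 1) : #(univ.image e)ᶜ ≤ 1 := by
  rw [card_compl, card_image_of_injective _ he, card_univ, Fintype.card_prod, Fintype.card_bool]
  omega

/-- With `c = false` the filter contains every `ε` whose transversal contains `S`, with
`c = true` every `ε` whose transversal misses `S`. -/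
lemma card_filter_forall_apply_mem_mul_two_pow_le [DecidableEq ι] {S : Finset V}
    (hS : ¬ ContainsPair e S) (c : Bool) :
    #{ε : ι → Bool | ∀ i b, e (i, b) ∈ S → ε i = xor b c} * 2 ^ #S ≤
      2 ^ (Fintype.card ι + #{w ∈ S | w ∉ univ.image e}) := by
  set T : Finset ι := {i | ∃ b, e (i, b) ∈ S}
  have hsub : ({ε : ι → Bool | ∀ i b, e (i, b) ∈ S → ε i = xor b c} : Finset _) ⊆
      ({ε | ∀ i ∈ T, ε i = xor (decide (e (i, true) ∈ S)) c} : Finset (ι → Bool)) := by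
    intro ε hε
    simp only [mem_filter, mem_univ, true_and] at hε ⊢
    intro i hi
    obtain ⟨b, hb⟩ := (mem_filter.mp hi).2
    rw [hε i b hb, ← eq_decide_of_apply_mem hS hb]
  calc _ ≤ #{ε : ι → Bool | ∀ i ∈ T, ε i = xor (decide (e (i, true) ∈ S)) c} *
        2 ^ (#T + #{w ∈ S | w ∉ univ.image e}) :=
        Nat.mul_le_mul (card_le_card hsub)
          (Nat.pow_le_pow_right two_pos (card_le_of_not_containsPair hS))
    _ = _ := by rw [pow_add, ← mul_assoc, card_filter_forall_eq_mul_two_pow, pow_add]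

lemma card_monochromatic_mul_two_pow_le [Fintype V] [DecidableEq ι] (he : Injective e)
    (hV : Fintype.card V ≤ 2 * Fintype.card ι + 1) (S : Finset V) :
    #{ε | S ⊆ transversal e ε ∨ Disjoint S (transversal e ε)} * 2 ^ #S ≤
      2 ^ (Fintype.card ι + 1) := by
  by_cases hS : ContainsPair e S
  · rw [filter_false_of_mem fun ε _ => not_or.mpr (hS.not_monochromatic he ε), card_empty,
      zero_mul]
    exact Nat.zero_le _
  set inside : Finset (ι → Bool) := {ε | S ⊆ transversal e ε}
  set outside : Finset (ι → Bool) := {ε | Disjoint S (transversal e ε)}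
  set r := #{w ∈ S | w ∉ univ.image e}
  have hin : inside ⊆ ({ε | ∀ i b, e (i, b) ∈ S → ε i = xor b false} : Finset (ι → Bool)) :=
    fun ε hε => mem_filter.mpr ⟨mem_univ _, fun i b hb => by
      simpa using (apply_mem_transversal_iff he).mp ((mem_filter.mp hε).2 hb)⟩
  have hout : outside ⊆ ({ε | ∀ i b, e (i, b) ∈ S → ε i = xor b true} : Finset (ι → Bool)) :=
    fun ε hε => mem_filter.mpr ⟨mem_univ _, fun i b hb => by
      simpa using Bool.eq_not_of_ne ((apply_mem_transversal_iff he).not.mp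
        (disjoint_left.mp (mem_filter.mp hε).2 hb))⟩
  have hinside : #inside * 2 ^ #S ≤ 2 ^ (Fintype.card ι + r) :=
    (Nat.mul_le_mul_right _ (card_le_card hin)).trans
      (card_filter_forall_apply_mem_mul_two_pow_le hS false)
  have houtside : #outside * 2 ^ #S ≤ 2 ^ (Fintype.card ι + r) :=
    (Nat.mul_le_mul_right _ (card_le_card hout)).trans
      (card_filter_forall_apply_mem_mul_two_pow_le hS true)
  have hr : r ≤ 1 := (card_le_card fun w hw => mem_compl.mpr (mem_filter.mp hw).2).trans
    (card_compl_image_le_one he hV)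
  rw [filter_or]
  refine (Nat.mul_le_mul_right _ (card_union_le inside outside)).trans ?_
  rcases Nat.eq_zero_or_pos r with hr0 | hr1
  · rw [hr0, add_zero] at hinside houtside
    rw [add_mul, pow_succ, mul_two]
    exact Nat.add_le_add hinside houtside
  · obtain ⟨w, hw⟩ := card_pos.mp hr1
    have hempty : inside = ∅ := filter_false_of_mem fun ε _ h =>
      (mem_filter.mp hw).2 (transversal_subset_image ε (h (mem_filter.mp hw).1))
    rw [hempty, card_empty, zero_add]
    exact houtside.trans (Nat.pow_le_pow_right two_pos (by omega))

theorem exists_transversal_not_monochromatic [Fintype V] [DecidableEq ι] {κ : Type*}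
    (he : Injective e) (hV : Fintype.card V ≤ 2 * Fintype.card ι + 1) (S : κ → Finset V)
    (W : Finset κ) (hW : ∀ k, k ∉ W → ContainsPair e (S k))
    (hsum : ∑ k ∈ W, ((2 : ℝ) ^ #(S k))⁻¹ < 1 / 2) :
    ∃ ε, ∀ k, ¬ S k ⊆ transversal e ε ∧ ¬ Disjoint (S k) (transversal e ε) := by
  set bad : κ → Finset (ι → Bool) :=
    fun k => {ε | S k ⊆ transversal e ε ∨ Disjoint (S k) (transversal e ε)}
  have hbad : ∀ k, (#(bad k) : ℝ) ≤ 2 ^ (Fintype.card ι + 1) * ((2 : ℝ) ^ #(S k))⁻¹ := by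
    intro k
    rw [← div_eq_mul_inv, le_div_iff₀ (by positivity)]
    exact_mod_cast card_monochromatic_mul_two_pow_le he hV (S k)
  have hlt : #(W.biUnion bad) < #(univ : Finset (ι → Bool)) := by
    have : (#(W.biUnion bad) : ℝ) < 2 ^ Fintype.card ι :=
      calc (#(W.biUnion bad) : ℝ) ≤ ∑ k ∈ W, (#(bad k) : ℝ) := by
            exact_mod_cast card_biUnion_le
        _ ≤ ∑ k ∈ W, 2 ^ (Fintype.card ι + 1) * ((2 : ℝ) ^ #(S k))⁻¹ :=
            sum_le_sum fun k _ => hbad k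
        _ < 2 ^ (Fintype.card ι + 1) * (1 / 2) := by rw [← mul_sum]; gcongr
        _ = 2 ^ Fintype.card ι := by ring
    rw [card_univ, Fintype.card_fun, Fintype.card_bool]
    exact_mod_cast this
  obtain ⟨ε, -, hε⟩ := exists_mem_notMem_of_card_lt_card hlt
  refine ⟨ε, fun k => ?_⟩
  by_cases hk : k ∈ W
  · have := fun h => hε (mem_biUnion.mpr ⟨k, hk, mem_filter.mpr ⟨mem_univ _, h⟩⟩)
    tauto
  · exact (hW k hk).not_monochromatic he ε

end Pairing

section Extension

variable {ι κ V : Type*}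

def sumPairing (e : ι × Bool → V) (f : κ × Bool → V) : (ι ⊕ κ) × Bool → V :=
  Sum.elim e f ∘ Equiv.sumProdDistrib ι κ Bool

def singlePair (a b : V) : Unit × Bool → V := fun x => cond x.2 a b

lemma singlePair_injective {a b : V} (hab : a ≠ b) : Injective (singlePair a b) := by
  rintro ⟨⟨⟩, _ | _⟩ ⟨⟨⟩, _ | _⟩ h <;> simp_all [singlePair, eq_comm]

variable {e : ι × Bool → V} {f : κ × Bool → V}

lemma sumPairing_injective (he : Injective e) (hf : Injective f) (hef : ∀ x y, e x ≠ f y) :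
    Injective (sumPairing e f) :=
  (he.sumElim hf hef).comp (Equiv.injective _)

lemma ContainsPair.sumPairing_left {S : Finset V} (h : ContainsPair e S) :
    ContainsPair (sumPairing e f) S :=
  let ⟨i, hi⟩ := h; ⟨Sum.inl i, hi⟩

lemma ContainsPair.sumPairing_right {S : Finset V} (h : ContainsPair f S) :
    ContainsPair (sumPairing e f) S :=
  let ⟨i, hi⟩ := h; ⟨Sum.inr i, hi⟩

lemma exists_nearly_perfect_extension [Fintype ι] [Fintype V] (he : Injective e) :
    ∃ (m : ℕ) (e' : (ι ⊕ Fin m) × Bool → V), Injective e' ∧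
      Fintype.card V ≤ 2 * Fintype.card (ι ⊕ Fin m) + 1 ∧
      ∀ S, ContainsPair e S → ContainsPair e' S := by
  classical
  set R := (univ.image e)ᶜ
  obtain ⟨g⟩ := Function.Embedding.nonempty_of_card_le (α := Fin (#R / 2) × Bool) (β := R)
    (by simp only [Fintype.card_prod, Fintype.card_fin, Fintype.card_bool, Fintype.card_coe]; omega)
  refine ⟨#R / 2, sumPairing e (Subtype.val ∘ g), sumPairing_injective he
    (Subtype.val_injective.comp g.injective) fun x y h => mem_compl.mp (g y).2 ?_, ?_,
    fun S hS => hS.sumPairing_left⟩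
  · rw [← show e x = g y from h]
    exact mem_image_of_mem e (mem_univ x)
  · have hR : #R = Fintype.card V - 2 * Fintype.card ι := by
      rw [card_compl, card_image_of_injective _ he, card_univ, Fintype.card_prod,
        Fintype.card_bool, mul_comm]
    have := Fintype.card_le_of_injective e he
    rw [Fintype.card_prod, Fintype.card_bool] at this
    rw [Fintype.card_sum, Fintype.card_fin]
    omega

lemma exists_pair_outside_range [Fintype ι] [DecidableEq V] {S : Finset V}
    (hS : ¬ ContainsPair e S) (h : Fintype.card ι + 2 ≤ #S) :
    ∃ a ∈ S, ∃ b ∈ S, a ≠ b ∧ (∀ x, e x ≠ a) ∧ ∀ x, e x ≠ b := by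
  have hS_le := card_le_of_not_containsPair hS
  have := card_le_univ ({i | ∃ b, e (i, b) ∈ S} : Finset ι)
  obtain ⟨a, ha, b, hb, hab⟩ := one_lt_card.mp (by omega : 1 < #{w ∈ S | w ∉ univ.image e})
  simp only [mem_filter, mem_image, mem_univ, true_and, not_exists] at ha hb
  exact ⟨a, ha.1, b, hb.1, hab, ha.2, hb.2⟩

lemma exists_pairing_containsPair {ι : Type} [Fintype ι] {e : ι × Bool → V} (he : Injective e)
    (N : V → Finset V) (C : Finset V) (hC : ∀ v ∈ C, Fintype.card ι + #C < #(N v)) :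
    ∃ (κ : Type) (_ : Fintype κ) (f : κ × Bool → V), Injective f ∧
      Fintype.card κ ≤ Fintype.card ι + #C ∧ (∀ v ∈ C, ContainsPair f (N v)) ∧
      ∀ S, ContainsPair e S → ContainsPair f S := by
  classical
  induction C using Finset.induction_on with
  | empty => exact ⟨ι, inferInstance, e, he, by simp, by simp, fun _ => id⟩
  | insert u C hu ih =>
    rw [card_insert_of_notMem hu] at hC ⊢
    obtain ⟨κ, _, f, hf, hκ, hfC, hef⟩ :=
      ih fun v hv => by have := hC v (mem_insert_of_mem hv); omega
    by_cases hfu : ContainsPair f (N u)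
    · exact ⟨κ, inferInstance, f, hf, by omega, forall_mem_insert _ _ _ |>.mpr ⟨hfu, hfC⟩, hef⟩
    obtain ⟨a, ha, b, hb, hab, haf, hbf⟩ :=
      exists_pair_outside_range hfu (by have := hC u (mem_insert_self u C); omega)
    refine ⟨κ ⊕ Unit, inferInstance, sumPairing f (singlePair a b),
      sumPairing_injective hf (singlePair_injective hab) ?_, ?_, ?_,
      fun S hS => (hef S hS).sumPairing_left⟩
    · rintro x ⟨⟨⟩, _ | _⟩ <;> simp [singlePair, hbf, haf]
    · rw [Fintype.card_sum, Fintype.card_unit]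
      omega
    · exact forall_mem_insert _ _ _ |>.mpr
        ⟨ContainsPair.sumPairing_right ⟨(), ha, hb⟩, fun v hv => (hfC v hv).sumPairing_left⟩

end Extension

section Degrees

variable {α : Type*} (W : Finset α) (d : α → ℕ)

lemma card_filter_le_eq_add {m k : ℕ} (hk : m ≤ k) :
    #{v ∈ W | d v ≤ k} = #{v ∈ W | d v ≤ m} + #{v ∈ {v ∈ W | ¬ d v ≤ m} | d v ≤ k} := by
  rw [← card_filter_add_card_filter_not (s := {v ∈ W | d v ≤ k}) (fun v => d v ≤ m),
    filter_filter, filter_filter, filter_filter]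
  congr 2 <;> exact filter_congr fun v _ => by omega

theorem sum_inv_two_pow_le (m : ℕ) (c : ℝ) (hm : ∀ v ∈ W, m ≤ d v)
    (hW : ∀ k, m < k → (#{v ∈ W | d v ≤ k} : ℝ) ≤ 2 * k + c) :
    ∑ v ∈ W, ((2 : ℝ) ^ d v)⁻¹ ≤ (#{v ∈ W | d v ≤ m} + 2 * m + c + 4) / 2 ^ (m + 1) := by
  obtain ⟨n, hn⟩ : ∃ n, ∀ v ∈ W, d v < m + n :=
    ⟨W.sup d + 1, fun v hv => by have := le_sup (f := d) hv; omega⟩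
  induction n generalizing m c W with
  | zero =>
    obtain rfl : W = ∅ := eq_empty_of_forall_notMem fun v hv => by
      have := hm v hv; have := hn v hv; omega
    have := hW (m + 1) (by omega)
    simp only [sum_empty, filter_empty, card_empty, Nat.cast_zero, Nat.cast_add,
      Nat.cast_one] at this ⊢
    exact div_nonneg (by linarith) (by positivity)
  | succ n ih =>
    set W' : Finset α := {v ∈ W | ¬ d v ≤ m}
    set j := #{v ∈ W | d v ≤ m}
    have hlow : ∑ v ∈ W with d v ≤ m, ((2 : ℝ) ^ d v)⁻¹ = j / 2 ^ m := by
      rw [sum_congr rfl fun v hv => by rw [le_antisymm (mem_filter.mp hv).2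
        (hm v (mem_filter.mp hv).1)], sum_const, nsmul_eq_mul, div_eq_mul_inv]
    have hrest := ih W' (m + 1) (c - j) (fun v hv => by simp only [W', mem_filter] at hv; omega)
      (fun k hk => by
        have := hW k (by omega)
        rw [card_filter_le_eq_add W d (by omega : m ≤ k), Nat.cast_add] at this
        linarith)
      (fun v hv => by have := hn v (mem_filter.mp hv).1; omega)
    have hnext := hW (m + 1) (by omega)
    rw [card_filter_le_eq_add W d (by omega : m ≤ m + 1), Nat.cast_add] at hnext
    have hpow : (0 : ℝ) < 2 ^ m := by positivity
    have key : (j : ℝ) / 2 ^ m + (#{v ∈ W' | d v ≤ m + 1} + 2 * (m + 1 : ℕ) + (c - j) + 4) /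
        2 ^ (m + 1 + 1) ≤ (j + 2 * m + c + 4) / 2 ^ (m + 1) := by
      rw [pow_succ, pow_succ, div_add_div _ _ hpow.ne' (by positivity),
        div_le_div_iff₀ (by positivity) (by positivity)]
      push_cast at hnext ⊢
      nlinarith [mul_le_mul_of_nonneg_left hnext (mul_pos hpow hpow).le]
    rw [← sum_filter_add_sum_filter_not W (fun v => d v ≤ m), hlow]
    linarith

end Degrees

lemma exists_ne_pair_mem_of_card_offDiag_lt {V : Type*} {S : Finset V} {N : V → Finset V}
    (hN : ∀ v ∈ S, N v ⊆ S) (h : #S.offDiag < ∑ v ∈ S, #(N v).offDiag) :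
    ∃ v ∈ S, ∃ w ∈ S, v ≠ w ∧ ∃ a b, a ≠ b ∧ a ∈ N v ∧ b ∈ N v ∧ a ∈ N w ∧ b ∈ N w := by
  obtain ⟨⟨v, p⟩, hvp, ⟨w, q⟩, hwq, hne, hpq⟩ :=
    exists_ne_map_eq_of_card_lt_of_maps_to (s := S.sigma fun v => (N v).offDiag)
      (t := S.offDiag) (f := Sigma.snd) (by rwa [card_sigma]) fun x hx => by
        simp only [coe_sigma, Set.mem_sigma_iff, mem_coe, mem_offDiag] at hx ⊢
        exact ⟨hN _ hx.1 hx.2.1, hN _ hx.1 hx.2.2.1, hx.2.2.2⟩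
  simp only at hpq
  subst hpq
  simp only [mem_sigma, mem_offDiag] at hvp hwq
  exact ⟨v, hvp.1, w, hwq.1, fun hvw => hne (by subst hvw; rfl), p.1, p.2, hvp.2.2.2,
    hvp.2.1, hvp.2.2.1, hwq.2.1, hwq.2.2.1⟩

section Tournament

variable {V : Type*} [Fintype V] {A : V → V → Prop} [DecidableRel A]

variable (A) in
def outNbhd (v : V) : Finset V := {w | A v w}

lemma ncard_setOf_eq_card_outNbhd (v : V) : {w | A v w}.ncard = #(outNbhd A v) := by
  rw [← Set.ncard_coe_finset]
  simp [outNbhd]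

lemma one_le_ncard_of_forall_not_monochromatic {F : Finset V}
    (hF : ∀ v, ¬ outNbhd A v ⊆ F ∧ ¬ Disjoint (outNbhd A v) F) :
    (∀ v ∈ (F : Set V), 1 ≤ {w | w ∈ (F : Set V) ∧ A v w}.ncard) ∧
      (∀ v ∈ (F : Set V)ᶜ, 1 ≤ {w | w ∈ (F : Set V)ᶜ ∧ A v w}.ncard) ∧
      ∀ v, 1 ≤ {w | A v w ∧ (v ∈ (F : Set V) ↔ w ∉ (F : Set V))}.ncard := by
  have hpos : ∀ {s : Set V} {w : V}, w ∈ s → 1 ≤ s.ncard :=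
    fun {s} {w} hw => (Set.ncard_pos (Set.toFinite s)).mpr ⟨w, hw⟩
  refine ⟨fun v _ => ?_, fun v _ => ?_, fun v => ?_⟩ <;>
    obtain ⟨w, hw, hwF⟩ := not_subset.mp (hF v).1 <;>
    obtain ⟨w', hw', hwF'⟩ := not_disjoint_iff.mp (hF v).2 <;>
    simp only [outNbhd, mem_filter, mem_univ, true_and] at hw hw'
  · exact hpos (w := w') ⟨hwF', hw'⟩
  · exact hpos (w := w) ⟨hwF, hw⟩
  · by_cases hv : v ∈ F
    · exact hpos (w := w) ⟨hw, by simp [hv, hwF]⟩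
    · exact hpos (w := w') ⟨hw', by simp [hv, hwF']⟩

variable [DecidableEq V]

lemma IsTournament.two_mul_sum_card_outNbhd_inter (hT : IsTournament A) (S : Finset V) :
    2 * ∑ v ∈ S, #(outNbhd A v ∩ S) = #S * (#S - 1) := by
  have hcard : ∀ v, #(outNbhd A v ∩ S) = ∑ w ∈ S, if A v w then 1 else 0 := fun v => by
    rw [sum_boole, Nat.cast_id, outNbhd, filter_inter, univ_inter]
  have harc : ∀ v w, ((if A v w then 1 else 0) + if A w v then 1 else 0) =
      if v ≠ w then 1 else 0 := by
    intro v w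
    by_cases hvw : v = w
    · subst hvw
      simp [hT.1 v]
    · rcases hT.2 v w hvw with ⟨h1, h2⟩ | ⟨h1, h2⟩ <;> simp [h1, h2, hvw]
  calc 2 * ∑ v ∈ S, #(outNbhd A v ∩ S)
      = ∑ v ∈ S, ∑ w ∈ S, ((if A v w then 1 else 0) + if A w v then 1 else 0) := by
        simp_rw [hcard, sum_add_distrib, two_mul]
        rw [sum_comm (f := fun v w => if A w v then 1 else 0)]
    _ = ∑ v ∈ S, (#S - 1) := by
        refine sum_congr rfl fun v hv => ?_
        simp_rw [harc, sum_boole, Nat.cast_id, filter_ne, card_erase_of_mem hv]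
    _ = #S * (#S - 1) := by rw [sum_const, smul_eq_mul]

lemma IsTournament.card_filter_card_outNbhd_le (hT : IsTournament A) (k : ℕ) :
    #{v | #(outNbhd A v) ≤ k} ≤ 2 * k + 1 := by
  set S : Finset V := {v | #(outNbhd A v) ≤ k}
  have hsum : ∑ v ∈ S, #(outNbhd A v ∩ S) ≤ #S * k := by
    rw [← smul_eq_mul, ← sum_const]
    exact sum_le_sum fun v hv => (card_le_card inter_subset_left).trans (mem_filter.mp hv).2
  have := hT.two_mul_sum_card_outNbhd_inter S
  rcases Nat.eq_zero_or_pos #S with h0 | hpos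
  · omega
  · have : #S * (#S - 1) ≤ #S * (2 * k) := by nlinarith
    have := Nat.le_of_mul_le_mul_left this hpos
    omega

lemma IsTournament.outNbhd_subset_of_card_eq (hT : IsTournament A) {S : Finset V} {k : ℕ}
    (hS : #S = 2 * k + 1) (hk : ∀ v ∈ S, #(outNbhd A v) ≤ k) {v : V} (hv : v ∈ S) :
    outNbhd A v ⊆ S := by
  have hle : ∀ v ∈ S, #(outNbhd A v ∩ S) ≤ #(outNbhd A v) :=
    fun v _ => card_le_card inter_subset_left
  have hsum := hT.two_mul_sum_card_outNbhd_inter S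
  have hsum' : ∑ v ∈ S, #(outNbhd A v) ≤ #S * k := by
    rw [← smul_eq_mul, ← sum_const]
    exact sum_le_sum hk
  rw [hS, Nat.add_sub_cancel] at hsum
  rw [hS] at hsum'
  have heq := (sum_eq_sum_iff_of_le hle).mp (le_antisymm (sum_le_sum hle) (by linarith))
  exact inter_eq_left.mp (eq_of_subset_of_card_le inter_subset_left (heq v hv).ge)

lemma IsTournament.exists_ne_pair_mem_outNbhd (hT : IsTournament A) {S : Finset V}
    (hS : #S = 9) (hdeg : ∀ v ∈ S, #(outNbhd A v) = 4) :
    ∃ v ∈ S, ∃ w ∈ S, v ≠ w ∧ ∃ a b, a ≠ b ∧ a ∈ outNbhd A v ∧ b ∈ outNbhd A v ∧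
      a ∈ outNbhd A w ∧ b ∈ outNbhd A w := by
  refine exists_ne_pair_mem_of_card_offDiag_lt (fun v hv => hT.outNbhd_subset_of_card_eq
    (k := 4) hS (fun v hv => (hdeg v hv).le) hv) ?_
  rw [sum_congr rfl fun v hv => by rw [offDiag_card, hdeg v hv], offDiag_card, hS, sum_const, hS]
  decide

lemma IsTournament.exists_pairing_containsPair_outNbhd (hT : IsTournament A)
    (hδ : ∀ v, 4 ≤ #(outNbhd A v)) :
    ∃ (κ : Type) (_ : Fintype κ) (f : κ × Bool → V), Injective f ∧
      #{v | #(outNbhd A v) ≤ 4} ≤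
        2 * #{v | #(outNbhd A v) ≤ 4 ∧ ContainsPair f (outNbhd A v)} + 2 := by
  set L : Finset V := {v | #(outNbhd A v) ≤ 4}
  have hL : #L ≤ 9 := hT.card_filter_card_outNbhd_le 4
  have hcovered : ∀ {κ : Type} [Fintype κ] (f : κ × Bool → V) (D : Finset V), D ⊆ L →
      (∀ v ∈ D, ContainsPair f (outNbhd A v)) →
      #D ≤ #{v | #(outNbhd A v) ≤ 4 ∧ ContainsPair f (outNbhd A v)} := fun f D hDL hD =>
    card_le_card fun v hv => mem_filter.mpr ⟨mem_univ _, (mem_filter.mp (hDL hv)).2, hD v hv⟩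
  rcases (by omega : #L ≤ 8 ∨ #L = 9) with hL8 | hL9
  · obtain ⟨C, hCL, hC⟩ := exists_subset_card_eq (min_le_left #L 3)
    obtain ⟨κ, _, f, hf, -, hfC, -⟩ :=
      exists_pairing_containsPair (e := fun x : Empty × Bool => x.1.elim)
        (injective_of_subsingleton _) (outNbhd A) C fun v _ => by
          have := hδ v
          rw [Fintype.card_empty, hC]
          omega
    have := hcovered f C hCL hfC
    exact ⟨κ, inferInstance, f, hf, by omega⟩
  · obtain ⟨v, hv, w, hw, hvw, a, b, hab, hav, hbv, haw, hbw⟩ :=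
      hT.exists_ne_pair_mem_outNbhd hL9 fun v hv => le_antisymm (mem_filter.mp hv).2 (hδ v)
    obtain ⟨C, hC, hCcard⟩ := exists_subset_card_eq (s := L \ {v, w}) (n := 2) (by
      rw [card_sdiff_of_subset (by simp [insert_subset_iff, hv, hw]), card_pair hvw, hL9]
      norm_num)
    obtain ⟨κ, _, f, hf, -, hfC, hfe⟩ := exists_pairing_containsPair (singlePair_injective hab)
      (outNbhd A) C fun u _ => by
        have := hδ u
        rw [Fintype.card_unit, hCcard]
        omega
    have hvwC : v ∉ C ∧ w ∉ C := by
      constructor <;> intro h <;> simpa using hC h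
    have := hcovered f (insert v (insert w C))
      (insert_subset hv (insert_subset hw fun u hu => (mem_sdiff.mp (hC hu)).1))
      (by
        simp only [mem_insert, forall_eq_or_imp]
        exact ⟨hfe _ ⟨(), hav, hbv⟩, hfe _ ⟨(), haw, hbw⟩, hfC⟩)
    rw [card_insert_of_notMem (by simp [hvw, hvwC.1]), card_insert_of_notMem hvwC.2,
      hCcard] at this
    exact ⟨κ, inferInstance, f, hf, by omega⟩

lemma IsTournament.sum_inv_two_pow_card_outNbhd_lt (hT : IsTournament A)
    (hδ : ∀ v, 4 ≤ #(outNbhd A v)) {κ : Type*} [Fintype κ] (f : κ × Bool → V)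
    (hf : #{v | #(outNbhd A v) ≤ 4} ≤
        2 * #{v | #(outNbhd A v) ≤ 4 ∧ ContainsPair f (outNbhd A v)} + 2) :
    ∑ v ∈ {v | ¬ ContainsPair f (outNbhd A v)}, ((2 : ℝ) ^ #(outNbhd A v))⁻¹ < 1 / 2 := by
  set γ := #{v | #(outNbhd A v) ≤ 4 ∧ ContainsPair f (outNbhd A v)}
  set W : Finset V := {v | ¬ ContainsPair f (outNbhd A v)}
  have hcount : ∀ k, 4 ≤ k →
      #{v ∈ W | #(outNbhd A v) ≤ k} + γ ≤ #{v | #(outNbhd A v) ≤ k} := by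
    intro k hk
    rw [← card_union_of_disjoint]
    · refine card_le_card (union_subset (fun v hv => ?_) fun v hv => ?_)
      · simp only [W, mem_filter] at hv ⊢
        exact ⟨mem_univ _, hv.2⟩
      · simp only [mem_filter] at hv ⊢
        exact ⟨mem_univ _, by omega⟩
    · refine disjoint_left.mpr fun v hv hv' => ?_
      simp only [W, mem_filter] at hv hv'
      exact hv.1.2 hv'.2.2
  have hsum := sum_inv_two_pow_le W (fun v => #(outNbhd A v)) 4 (1 - γ) (fun v _ => hδ v)
    fun k hk => by
      have := (hcount k (by omega)).trans (hT.card_filter_card_outNbhd_le k)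
      rw [← Nat.cast_le (α := ℝ)] at this
      push_cast at this
      linarith
  have h4 := hcount 4 le_rfl
  have : ((#{v ∈ W | #(outNbhd A v) ≤ 4} : ℕ) : ℝ) ≤ γ + 2 := by
    exact_mod_cast (by omega : #{v ∈ W | #(outNbhd A v) ≤ 4} ≤ γ + 2)
  refine hsum.trans_lt ?_
  norm_num
  linarith

end Tournament

/-- Every tournament with minimum out-degree at least 4 has a balanced partition
`(V1, V1ᶜ)` of its vertex set such that the minimum out-degrees of the two induced
subdigraphs and of the bipartite subdigraph of arcs between the parts are all at
least 1. -/
theorem stmt10 {V : Type*} [Fintype V] (A : V → V → Prop) (hT : IsTournament A)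
    (hδ : ∀ v : V, 4 ≤ {w | A v w}.ncard) :
    ∃ V1 : Set V,
      |(V1.ncard : ℤ) - ((V1ᶜ : Set V).ncard : ℤ)| ≤ 1 ∧
      (∀ v ∈ V1, 1 ≤ {w | w ∈ V1 ∧ A v w}.ncard) ∧
      (∀ v ∈ (V1ᶜ : Set V), 1 ≤ {w | w ∈ V1ᶜ ∧ A v w}.ncard) ∧
      (∀ v : V, 1 ≤ {w | A v w ∧ (v ∈ V1 ↔ w ∉ V1)}.ncard) := by
  classical
  simp only [ncard_setOf_eq_card_outNbhd] at hδ
  obtain ⟨κ, _, f, hf, hcover⟩ := hT.exists_pairing_containsPair_outNbhd hδ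
  obtain ⟨m, e, he, hV, hfe⟩ := exists_nearly_perfect_extension hf
  obtain ⟨ε, hε⟩ := exists_transversal_not_monochromatic he hV (outNbhd A) _
    (fun v hv => hfe _ (by simpa using hv)) (hT.sum_inv_two_pow_card_outNbhd_lt hδ f hcover)
  have hV' := Fintype.card_le_of_injective e he
  rw [Fintype.card_prod, Fintype.card_bool] at hV'
  refine ⟨transversal e ε, ?_, one_le_ncard_of_forall_not_monochromatic hε⟩
  rw [← coe_compl, Set.ncard_coe_finset, Set.ncard_coe_finset, card_compl,
    card_transversal he, abs_le]
  omega
end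

section
/- There exists an absolute positive constant c2 such that for infinitely many positive integers k there is a tournament T with minimum out-degree at least 2k + c2·√k such that for every partition of V(T) into two disjoint sets V1 and V2, at least one of the minimum out-degrees of T[V1], T[V2] and T[V1,V2] is smaller than k. -/
/-!
Take the Paley tournament on `ZMod q`, `q ≡ 3 (mod 4)` prime, with `x → y` iff `y - x` is a
nonzero square; every out-degree is `(q - 1) / 2`. With `χ` the quadratic character, put
`M v w = χ (w - v) + 1`. The character sums `∑ χ = 0` and
`∑ v, χ (w - v) χ (w' - v) = q [w = w'] - 1` (a Jacobi sum) give `Mᵀ M = q I + (q - 1) J`.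
For a partition `(V₁, V₂)` let `ε` be `1` on `V₁` and `-1` on `V₂`; then
`∑ v, (M ε)_v ^ 2 = q ^ 2 + (q - 1) (∑ ε) ^ 2 ≥ q ^ 2`, so `(M ε)_v ^ 2 ≥ q` for some `v`.
As `(M ε)_v = 2 (|N⁺(v) ∩ V₁| - |N⁺(v) ∩ V₂|) ± 1`, one of these two parts of `N⁺(v)` has at
most `(q - √q) / 4` vertices, fewer than `k = ⌊(q - ⌊√q⌋) / 4⌋ + 1`, while
`(q - 1) / 2 ≥ 2 k + √k / 8`. Depending on the side of `v`, that part is the out-neighbourhood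
of `v` in `T[V₁]`, `T[V₂]` or `T[V₁, V₂]`.
-/

open Finset Function

theorem Nat.exists_prime_ge_mod_four_eq_three (n : ℕ) : ∃ p, n ≤ p ∧ p.Prime ∧ p % 4 = 3 := by
  obtain ⟨p, hnp, hp, hp3⟩ := Nat.forall_exists_prime_gt_and_zmodEq n (q := 4) (a := 3)
    (by norm_num) (by norm_num [Int.isCoprime_iff_gcd_eq_one])
  exact ⟨p, hnp.le, hp, by unfold Int.ModEq at hp3; omega⟩

theorem le_sub_sqrt_div_four_add_one {K n : ℕ} (hn : 8 * K + 64 ≤ n) :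
    K ≤ (n - Nat.sqrt n) / 4 + 1 := by
  have h8 : 8 ≤ Nat.sqrt n := Nat.le_sqrt.mpr (by omega)
  have : 8 * Nat.sqrt n ≤ n := (Nat.mul_le_mul_right _ h8).trans (Nat.sqrt_le n)
  omega

theorem two_mul_add_sqrt_div_eight_le {n d k : ℕ} (hd : 2 * d + 1 = n)
    (hk : 4 * k + Nat.sqrt n ≤ n + 4) (hn : 64 ≤ n) :
    (2 * k + 1 / 8 * √k : ℝ) ≤ d := by
  set s := Nat.sqrt n
  have h8 : 8 ≤ s := Nat.le_sqrt.mpr (by omega)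
  have hn' : n < (s + 1) * (s + 1) := Nat.lt_succ_sqrt n
  have hsqrt : √k ≤ (s + 3) / 2 := by
    have : 4 * k ≤ (s + 3) ^ 2 := by nlinarith
    rw [Real.sqrt_le_left (by positivity)]
    have : (4 * k : ℝ) ≤ (s + 3) ^ 2 := by exact_mod_cast this
    linarith
  have hk' : (4 * k + s : ℝ) ≤ n + 4 := by exact_mod_cast hk
  have hd' : (2 * d + 1 : ℝ) = n := by exact_mod_cast hd
  have h8' : (8 : ℝ) ≤ s := by exact_mod_cast h8
  linarith

theorem min_le_sub_sqrt_div_four {a b n : ℕ} {e : ℤ} (hn : 2 * (a + b) + 1 = n)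
    (he : e = 1 ∨ e = -1) (h : (n : ℤ) ≤ (2 * ((a : ℤ) - b) + e) ^ 2) :
    min a b ≤ (n - Nat.sqrt n) / 4 := by
  have hs : (Nat.sqrt n : ℤ) * Nat.sqrt n ≤ n := by exact_mod_cast Nat.sqrt_le n
  suffices 4 * min a b + Nat.sqrt n ≤ n by omega
  by_contra! hlt
  rcases le_total a b with hab | hab
  · rw [min_eq_left hab] at hlt
    have : 2 * ((b : ℤ) - a) + 2 ≤ Nat.sqrt n := by omega
    rcases he with rfl | rfl <;> nlinarith
  · rw [min_eq_right hab] at hlt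
    have : 2 * ((a : ℤ) - b) + 2 ≤ Nat.sqrt n := by omega
    rcases he with rfl | rfl <;> nlinarith

section CharacterSums

variable {F : Type*} [Field F] [Fintype F] [DecidableEq F]

theorem sum_quadraticChar_sub (hF : ringChar F ≠ 2) (w : F) :
    ∑ v, quadraticChar F (w - v) = 0 :=
  ((Equiv.subLeft w).sum_comp _).trans (quadraticChar_sum_zero hF)

theorem sum_quadraticChar_mul_add (hF : ringChar F ≠ 2) {c : F} (hc : c ≠ 0) :
    ∑ x, quadraticChar F x * quadraticChar F (x + c) = -1 := by
  have hJ : jacobiSum (quadraticChar F) (quadraticChar F) = -quadraticChar F (-1) := by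
    simpa only [(quadraticChar_isQuadratic F).inv]
      using jacobiSum_nontrivial_inv (quadraticChar_ne_one hF)
  -- with `x = -c * y` the sum becomes `χ (-1) * J(χ, χ)`, and `J(χ, χ) = J(χ, χ⁻¹) = -χ (-1)`
  have hsub : ∀ y, quadraticChar F (-c * y) * quadraticChar F (-c * y + c)
      = quadraticChar F (-1) * (quadraticChar F y * quadraticChar F (1 - y)) := fun y => by
    rw [show -c * y + c = c * (1 - y) by ring, show -c * y = -1 * (c * y) by ring]
    simp only [map_mul]
    linear_combination
      (quadraticChar F (-1) * quadraticChar F y * quadraticChar F (1 - y)) * quadraticChar_sq_one hc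
  rw [← Equiv.sum_comp (Equiv.mulLeft₀ (-c) (neg_ne_zero.mpr hc))]
  simp only [Equiv.mulLeft₀_apply, hsub, ← mul_sum]
  rw [← jacobiSum, hJ]
  linear_combination -quadraticChar_sq_one (neg_ne_zero.mpr (one_ne_zero (α := F)))

theorem sum_quadraticChar_sub_mul_sub (hF : ringChar F ≠ 2) (w w' : F) :
    ∑ v, quadraticChar F (w - v) * quadraticChar F (w' - v)
      = (if w = w' then (Fintype.card F : ℤ) else 0) - 1 := by
  rw [← Equiv.sum_comp (Equiv.subLeft w)]
  simp only [Equiv.subLeft_apply, sub_sub_cancel]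
  split_ifs with h
  · subst h
    have hsq : ∀ x : F, quadraticChar F x * quadraticChar F x = 1 - if x = 0 then 1 else 0 :=
      fun x => by
        split_ifs with hx
        · simp [hx]
        · simpa [sq] using quadraticChar_sq_one hx
    simp only [sub_sub_cancel, hsq, sum_sub_distrib, sum_ite_eq', mem_univ, if_true, sum_const,
      card_univ, nsmul_eq_mul, mul_one]
  · simp only [show ∀ x, w' - (w - x) = x + (w' - w) from fun x => by ring]
    rw [zero_sub]
    exact sum_quadraticChar_mul_add hF (sub_ne_zero.mpr (Ne.symm h))

theorem sum_sq_sum_quadraticChar_sub_add_one_mul (hF : ringChar F ≠ 2) (ε : F → ℤ) :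
    ∑ v, (∑ w, (quadraticChar F (w - v) + 1) * ε w) ^ 2
      = Fintype.card F * ∑ w, ε w ^ 2 + (Fintype.card F - 1) * (∑ w, ε w) ^ 2 := by
  have hgram : ∀ w w', ∑ v, (quadraticChar F (w - v) + 1) * (quadraticChar F (w' - v) + 1)
      = (if w = w' then (Fintype.card F : ℤ) else 0) + (Fintype.card F - 1) := fun w w' => by
    simp only [add_mul, mul_add, mul_one, one_mul, sum_add_distrib,
      sum_quadraticChar_sub_mul_sub hF, sum_quadraticChar_sub hF, sum_const, card_univ,
      nsmul_eq_mul]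
    ring
  calc ∑ v, (∑ w, (quadraticChar F (w - v) + 1) * ε w) ^ 2
      = ∑ w, ∑ w', ε w * ε w' *
          ∑ v, (quadraticChar F (w - v) + 1) * (quadraticChar F (w' - v) + 1) := by
        simp_rw [sq, sum_mul_sum, mul_sum]
        rw [sum_comm]
        refine sum_congr rfl fun w _ => ?_
        rw [sum_comm]
        exact sum_congr rfl fun w' _ => sum_congr rfl fun v _ => by ring
    _ = _ := by
        simp only [hgram]
        simp only [mul_add, sum_add_distrib, mul_ite, mul_zero, sum_ite_eq, mem_univ, if_true]
        simp only [← sum_mul, ← mul_sum, sq]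
        ring

end CharacterSums

section Paley

variable {F : Type*} [Field F] [Fintype F]

theorem ringChar_ne_two_of_card_mod_four_eq_three (hF : Fintype.card F % 4 = 3) :
    ringChar F ≠ 2 := fun h => by
  have := FiniteField.even_card_iff_char_two.mp h
  omega

variable [DecidableEq F]

variable (F) in
def paleyAdj (x y : F) : Prop := quadraticChar F (y - x) = 1

instance : DecidableRel (paleyAdj F) := fun _ _ => inferInstanceAs (Decidable (_ = _))

theorem isTournament_paleyAdj (hF : Fintype.card F % 4 = 3) : IsTournament (paleyAdj F) := by
  have hneg : quadraticChar F (-1) = -1 := by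
    rw [quadraticChar_neg_one (ringChar_ne_two_of_card_mod_four_eq_three hF),
      ZMod.χ₄_nat_three_mod_four hF]
  refine ⟨fun v => by simp [paleyAdj], fun u v huv => ?_⟩
  have hrev : quadraticChar F (u - v) = -quadraticChar F (v - u) := by
    rw [← neg_sub, ← neg_one_mul, map_mul, hneg, neg_one_mul]
  unfold paleyAdj
  rw [hrev]
  rcases quadraticChar_dichotomy (sub_ne_zero.mpr huv.symm) with h | h <;> simp [h] <;> tauto

theorem quadraticChar_sub_add_one (v w : F) :
    quadraticChar F (w - v) + 1
      = 2 * (if paleyAdj F v w then 1 else 0) + if w = v then 1 else 0 := by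
  by_cases hwv : w = v
  · simp [hwv, paleyAdj]
  · rcases quadraticChar_dichotomy (sub_ne_zero.mpr hwv) with h | h <;> simp [paleyAdj, h, hwv]

theorem sum_quadraticChar_sub_add_one_mul (f : F → ℤ) (v : F) :
    ∑ w, (quadraticChar F (w - v) + 1) * f w = 2 * ∑ w with paleyAdj F v w, f w + f v := by
  simp only [quadraticChar_sub_add_one, add_mul, sum_add_distrib, mul_assoc, ← mul_sum,
    ite_mul, one_mul, zero_mul, sum_ite_eq', mem_univ, if_true, sum_filter]

theorem two_mul_ncard_paleyAdj_add_one (hF : ringChar F ≠ 2) (v : F) :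
    2 * {w | paleyAdj F v w}.ncard + 1 = Fintype.card F := by
  have h := sum_quadraticChar_sub_add_one_mul (fun _ => 1) v
  have hχ : ∑ w, quadraticChar F (w - v) = 0 :=
    ((Equiv.subRight v).sum_comp _).trans (quadraticChar_sum_zero hF)
  simp only [mul_one, sum_add_distrib, hχ, sum_const, card_univ, nsmul_eq_mul, zero_add] at h
  rw [Set.ncard_eq_toFinset_card', Set.toFinset_ofPred]
  exact_mod_cast h.symm

theorem exists_le_sq_sum_quadraticChar_sub_add_one_mul (hF : ringChar F ≠ 2) (ε : F → ℤ)
    (hε : ∀ w, ε w ^ 2 = 1) :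
    ∃ v, (Fintype.card F : ℤ) ≤ (∑ w, (quadraticChar F (w - v) + 1) * ε w) ^ 2 := by
  have hsum := sum_sq_sum_quadraticChar_sub_add_one_mul hF ε
  simp only [hε, sum_const, card_univ, nsmul_eq_mul, mul_one] at hsum
  have hF1 : (1 : ℤ) ≤ Fintype.card F := by exact_mod_cast Fintype.card_pos
  obtain ⟨v, -, hv⟩ := exists_le_of_sum_le univ_nonempty (f := fun _ => (Fintype.card F : ℤ))
    (g := fun v => (∑ w, (quadraticChar F (w - v) + 1) * ε w) ^ 2) (by
      simp only [hsum, sum_const, card_univ, nsmul_eq_mul]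
      nlinarith [sq_nonneg (∑ w, ε w)])
  exact ⟨v, hv⟩

theorem exists_min_ncard_paleyAdj_le (hF : ringChar F ≠ 2) (V1 : Set F) :
    ∃ v, min {w | w ∈ V1 ∧ paleyAdj F v w}.ncard {w | w ∈ V1ᶜ ∧ paleyAdj F v w}.ncard
      ≤ (Fintype.card F - Nat.sqrt (Fintype.card F)) / 4 := by
  classical
  obtain ⟨v, hv⟩ := exists_le_sq_sum_quadraticChar_sub_add_one_mul hF
    (fun w => if w ∈ V1 then 1 else -1) (fun w => by split_ifs <;> norm_num)
  refine ⟨v, ?_⟩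
  set N : Finset F := {w | paleyAdj F v w}
  have hin : {w | w ∈ V1 ∧ paleyAdj F v w}.ncard = #{w ∈ N | w ∈ V1} := by
    simp [N, Set.ncard_eq_toFinset_card', filter_filter, and_comm]
  have hout : {w | w ∈ V1ᶜ ∧ paleyAdj F v w}.ncard = #{w ∈ N | w ∉ V1} := by
    simp [N, Set.ncard_eq_toFinset_card', filter_filter, and_comm]
  rw [sum_quadraticChar_sub_add_one_mul, sum_ite, sum_const, sum_const] at hv
  rw [hin, hout]
  refine min_le_sub_sqrt_div_four (e := if v ∈ V1 then 1 else -1) ?_ (by split_ifs <;> simp)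
    (by simpa [sub_eq_add_neg] using hv)
  rw [card_filter_add_card_filter_not, ← two_mul_ncard_paleyAdj_add_one hF v]
  simp [N, Set.ncard_eq_toFinset_card']

end Paley

section Relabel

variable {V W : Type*}

theorem IsTournament.onFun {A : V → V → Prop} (hA : IsTournament A) {f : W → V}
    (hf : Injective f) : IsTournament (A on f) :=
  ⟨fun v => hA.1 (f v), fun u v huv => hA.2 (f u) (f v) (hf.ne huv)⟩

theorem ncard_setOf_comp_equiv (e : W ≃ V) (p : V → Prop) :
    {w | p (e w)}.ncard = {x | p x}.ncard :=
  Set.ncard_preimage_of_injective_subset_range e.injective (e.range_eq_univ ▸ Set.subset_univ _)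

theorem exists_min_ncard_onFun_le {A : V → V → Prop} {m : ℕ} (e : W ≃ V)
    (h : ∀ V1 : Set V, ∃ v, min {w | w ∈ V1 ∧ A v w}.ncard {w | w ∈ V1ᶜ ∧ A v w}.ncard ≤ m)
    (V1 : Set W) :
    ∃ v, min {w | w ∈ V1 ∧ (A on e) v w}.ncard {w | w ∈ V1ᶜ ∧ (A on e) v w}.ncard ≤ m := by
  obtain ⟨v, hv⟩ := h (e.symm ⁻¹' V1)
  refine ⟨e.symm v, ?_⟩
  have hS : ∀ S : Set W, {w | w ∈ S ∧ (A on e) (e.symm v) w}.ncard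
      = {x | x ∈ e.symm ⁻¹' S ∧ A v x}.ncard := fun S => by
    simpa [onFun] using ncard_setOf_comp_equiv e (fun x => x ∈ e.symm ⁻¹' S ∧ A v x)
  rwa [hS, hS, Set.preimage_compl]

theorem exists_outNbhd_ncard_lt_of_min_lt {A : V → V → Prop} {k : ℕ} (V1 : Set V) (v : V)
    (h : min {w | w ∈ V1 ∧ A v w}.ncard {w | w ∈ V1ᶜ ∧ A v w}.ncard < k) :
    (∃ v ∈ V1, {w | w ∈ V1 ∧ A v w}.ncard < k) ∨
    (∃ v ∈ V1ᶜ, {w | w ∈ V1ᶜ ∧ A v w}.ncard < k) ∨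
    (∃ v, {w | A v w ∧ (v ∈ V1 ↔ w ∉ V1)}.ncard < k) := by
  by_cases hv : v ∈ V1 <;> rcases min_lt_iff.mp h with h | h
  · exact .inl ⟨v, hv, h⟩
  · refine .inr (.inr ⟨v, ?_⟩)
    simpa [hv, and_comm] using h
  · refine .inr (.inr ⟨v, ?_⟩)
    simpa [hv, and_comm] using h
  · exact .inr (.inl ⟨v, hv, h⟩)

end Relabel

/-- There is an absolute positive constant `c2` such that for infinitely many positive
integers `k` there is a tournament with minimum out-degree at least `2k + c2·√k` in
which, for every partition `(V1, V1ᶜ)` of the vertex set, at least one of the minimum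
out-degrees of the two induced subdigraphs and of the bipartite subdigraph between the
parts is smaller than `k`. -/
theorem stmt12 :
    ∃ c2 : ℝ, 0 < c2 ∧ ∀ K : ℕ, ∃ k : ℕ, K ≤ k ∧ 0 < k ∧
      ∃ (n : ℕ) (A : Fin n → Fin n → Prop), IsTournament A ∧
        (∀ v : Fin n, (2 * k + c2 * Real.sqrt k : ℝ) ≤ ({w | A v w} : Set (Fin n)).ncard) ∧
        ∀ V1 : Set (Fin n),
          (∃ v ∈ V1, {w | w ∈ V1 ∧ A v w}.ncard < k) ∨
          (∃ v ∈ (V1ᶜ : Set (Fin n)), {w | w ∈ V1ᶜ ∧ A v w}.ncard < k) ∨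
          (∃ v : Fin n, {w | A v w ∧ (v ∈ V1 ↔ w ∉ V1)}.ncard < k) := by
  refine ⟨1 / 8, by norm_num, fun K => ?_⟩
  obtain ⟨p, hpK, hp, hp3⟩ := Nat.exists_prime_ge_mod_four_eq_three (8 * K + 64)
  have : Fact p.Prime := ⟨hp⟩
  have hcard : Fintype.card (ZMod p) = p := ZMod.card p
  have hp3' : Fintype.card (ZMod p) % 4 = 3 := by rwa [hcard]
  have hF : ringChar (ZMod p) ≠ 2 := ringChar_ne_two_of_card_mod_four_eq_three hp3'
  let e : Fin p ≃ ZMod p := (ZMod.finEquiv p).toEquiv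
  refine ⟨(p - Nat.sqrt p) / 4 + 1, le_sub_sqrt_div_four_add_one hpK, Nat.succ_pos _, p,
    paleyAdj (ZMod p) on e, (isTournament_paleyAdj hp3').onFun e.injective,
    fun v => ?_, fun V1 => ?_⟩
  · have hdeg := two_mul_ncard_paleyAdj_add_one hF (e v)
    rw [hcard, ← ncard_setOf_comp_equiv e] at hdeg
    exact two_mul_add_sqrt_div_eight_le hdeg (by have := Nat.sqrt_le_self p; omega) (by omega)
  · obtain ⟨v, hv⟩ := exists_min_ncard_onFun_le e (exists_min_ncard_paleyAdj_le hF) V1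
    exact exists_outNbhd_ncard_lt_of_min_lt V1 v (hv.trans_lt (by rw [hcard]; omega))
end
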